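/- Let Q, R^L, R^R be positive semi-definite with R^L > 0, R^R > 0, and let p ∈ [0,1]. For each horizon N, define (with terminal values Z_{N+1}(N) = X_{N+1}(N) = 0) the backward recursion: Υ_k = [B^L B^R]′Z_{k+1}[B^L B^R] + diag(R^L,R^R), K_k = Υ_k^{−1}[B^L B^R]′Z_{k+1}A, Z_k = A′Z_{k+1}A + Q − K_k′Υ_kK_k, Ψ_{k+1} = (1−p)Z_{k+1} + pX_{k+1}, Λ_k = (B^L)′Ψ_{k+1}B^L + R^L, M_k = (B^L)′Ψ_{k+1}A, X_k = A′Ψ_{k+1}A + Q − M_k′Λ_k^{−1}M_k. Then for every N the recursion is well defined (Υ_k > 0 and Λ_k > 0 at every step), all Z_k(N) and X_k(N) are positive semi-definite, and the matrices Ψ_0(N) := (1−p)Z_0(N) + pX_0(N) are monotonically nondecreasing in N in the Loewner order: Ψ_0(N) ⪯ Ψ_0(N+1) for all N ≥ 0. -/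

import Mathlib

/-!
Both recursions are instances of the Riccati map
`P ↦ A′PA + Q − (B′PA)′(B′PB + R)⁻¹(B′PA)`: for `Z` with `B = [B^L B^R]`, `R = diag(R^L, R^R)`,
for `X` with `B = B^L`, `R = R^L`, applied to `Ψ`. Completing the square shows that for every
gain `K` the cost `(A − BK)′P(A − BK) + Q + K′RK` exceeds the map by a PSD square, with equality
at the optimal gain. Hence the map preserves positive semidefiniteness, and it is monotone:
for `P ⪯ P'`, evaluate both costs at the gain optimal for `P'`. As `Ψ` is a convex combination
of `Z` and `X`, induction on the horizon gives positivity from `Z = X = 0`, and monotonicity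
from the first step, which is PSD and so dominates the zero terminal value.
-/

open Matrix

noncomputable section

namespace NCS12

/-- System data for the networked control system: plant matrices `A, B^L, B^R`,
weight matrices `Q, R^L, R^R` and packet-dropout probability `p`. -/
structure Sys (n mL mR : ℕ) where
  A : Matrix (Fin n) (Fin n) ℝ
  BL : Matrix (Fin n) (Fin mL) ℝ
  BR : Matrix (Fin n) (Fin mR) ℝ
  Q : Matrix (Fin n) (Fin n) ℝ
  RL : Matrix (Fin mL) (Fin mL) ℝ
  RR : Matrix (Fin mR) (Fin mR) ℝ
  p : ℝ

namespace Sys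

variable {n mL mR : ℕ} (S : Sys n mL mR)

/-- The stacked input matrix `[B^L  B^R]`. -/
def Bc : Matrix (Fin n) (Fin mL ⊕ Fin mR) ℝ := fromCols S.BL S.BR

/-- The stacked weight `diag(R^L, R^R)`. -/
def Rc : Matrix (Fin mL ⊕ Fin mR) (Fin mL ⊕ Fin mR) ℝ := fromBlocks S.RL 0 0 S.RR

/-- `Υ = [B^L B^R]′ Z [B^L B^R] + diag(R^L, R^R)`. -/
def Ups (Z : Matrix (Fin n) (Fin n) ℝ) : Matrix (Fin mL ⊕ Fin mR) (Fin mL ⊕ Fin mR) ℝ :=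
  S.Bcᵀ * Z * S.Bc + S.Rc

/-- `K = Υ⁻¹ [B^L B^R]′ Z A`. -/
def Kg (Z : Matrix (Fin n) (Fin n) ℝ) : Matrix (Fin mL ⊕ Fin mR) (Fin n) ℝ :=
  (S.Ups Z)⁻¹ * (S.Bcᵀ * Z * S.A)

/-- `Ψ = (1 − p) Z + p X`. -/
def Psi (Z X : Matrix (Fin n) (Fin n) ℝ) : Matrix (Fin n) (Fin n) ℝ :=
  (1 - S.p) • Z + S.p • X

/-- `Λ = (B^L)′ Ψ B^L + R^L`. -/
def Lam (Ψ : Matrix (Fin n) (Fin n) ℝ) : Matrix (Fin mL) (Fin mL) ℝ :=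
  S.BLᵀ * Ψ * S.BL + S.RL

/-- `M = (B^L)′ Ψ A`. -/
def Mg (Ψ : Matrix (Fin n) (Fin n) ℝ) : Matrix (Fin mL) (Fin n) ℝ :=
  S.BLᵀ * Ψ * S.A

/-- One backward step of the `Z`-Riccati recursion: `A′ZA + Q − K′ΥK`. -/
def Zstep (Z : Matrix (Fin n) (Fin n) ℝ) : Matrix (Fin n) (Fin n) ℝ :=
  S.Aᵀ * Z * S.A + S.Q - (S.Kg Z)ᵀ * S.Ups Z * S.Kg Z

/-- One backward step of the `X`-Riccati recursion: `A′ΨA + Q − M′Λ⁻¹M`. -/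
def Xstep (Ψ : Matrix (Fin n) (Fin n) ℝ) : Matrix (Fin n) (Fin n) ℝ :=
  S.Aᵀ * Ψ * S.A + S.Q - (S.Mg Ψ)ᵀ * (S.Lam Ψ)⁻¹ * S.Mg Ψ

/-- The coupled Riccati recursion in "steps-to-go" form with terminal value `P`:
`ZX P j` is the pair `(Z_k(N), X_k(N))` when `j = N + 1 − k`.  In particular the
time-invariance `Z_k(N) = Z_{k−s}(N−s)` lets one write `Z_0(N) = (ZX P (N+1)).1`. -/
def ZX (P : Matrix (Fin n) (Fin n) ℝ) : ℕ → Matrix (Fin n) (Fin n) ℝ × Matrix (Fin n) (Fin n) ℝ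
  | 0 => (P, P)
  | j + 1 =>
      (S.Zstep (ZX P j).1, S.Xstep (S.Psi (ZX P j).1 (ZX P j).2))

end Sys

section

variable {ι κ : Type*} [Fintype κ] [DecidableEq κ]

lemma _root_.Matrix.PosSemidef.isSymm {Z : Matrix ι ι ℝ} (hZ : Z.PosSemidef) : Z.IsSymm :=
  isHermitian_iff_isSymm.mp hZ.isHermitian

lemma transpose_sub_inv_mul_mul_sub_inv_mul {U : Matrix κ κ ℝ} (hU : U.IsSymm)
    (hdet : IsUnit U.det) (F N : Matrix κ ι ℝ) :
    (F - U⁻¹ * N)ᵀ * U * (F - U⁻¹ * N) = Fᵀ * U * F - Fᵀ * N - Nᵀ * F + Nᵀ * U⁻¹ * N := by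
  rw [transpose_sub, transpose_mul, hU.inv.eq]
  simp only [Matrix.sub_mul, Matrix.mul_sub, Matrix.mul_assoc,
    mul_nonsing_inv_cancel_left _ _ hdet, nonsing_inv_mul_cancel_left _ _ hdet]
  abel

end

section

variable {ι κ : Type*} [Fintype ι] [Fintype κ]

lemma _root_.Matrix.PosSemidef.transpose_mul_mul_same {Z : Matrix ι ι ℝ} (hZ : Z.PosSemidef)
    (C : Matrix ι κ ℝ) : (Cᵀ * Z * C).PosSemidef := by
  simpa using hZ.conjTranspose_mul_mul_same C

lemma posDef_transpose_mul_mul_add {Z : Matrix ι ι ℝ} {R : Matrix κ κ ℝ}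
    (hZ : Z.PosSemidef) (hR : R.PosDef) (B : Matrix ι κ ℝ) : (Bᵀ * Z * B + R).PosDef :=
  PosDef.posSemidef_add (hZ.transpose_mul_mul_same B) hR

def riccatiCost (A : Matrix ι ι ℝ) (B : Matrix ι κ ℝ) (Q : Matrix ι ι ℝ) (R : Matrix κ κ ℝ)
    (Z : Matrix ι ι ℝ) (F : Matrix κ ι ℝ) : Matrix ι ι ℝ :=
  (A - B * F)ᵀ * Z * (A - B * F) + Q + Fᵀ * R * F

lemma riccatiCost_sub_riccatiCost (A Q Z₁ Z₂ : Matrix ι ι ℝ) (B : Matrix ι κ ℝ)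
    (R : Matrix κ κ ℝ) (F : Matrix κ ι ℝ) :
    riccatiCost A B Q R Z₂ F - riccatiCost A B Q R Z₁ F =
      (A - B * F)ᵀ * (Z₂ - Z₁) * (A - B * F) := by
  simp only [riccatiCost, Matrix.mul_sub, Matrix.sub_mul]
  abel

variable [DecidableEq κ]

def riccati (A : Matrix ι ι ℝ) (B : Matrix ι κ ℝ) (Q : Matrix ι ι ℝ) (R : Matrix κ κ ℝ)
    (Z : Matrix ι ι ℝ) : Matrix ι ι ℝ :=
  Aᵀ * Z * A + Q - (Bᵀ * Z * A)ᵀ * (Bᵀ * Z * B + R)⁻¹ * (Bᵀ * Z * A)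

def riccatiGain (A : Matrix ι ι ℝ) (B : Matrix ι κ ℝ) (R : Matrix κ κ ℝ)
    (Z : Matrix ι ι ℝ) : Matrix κ ι ℝ :=
  (Bᵀ * Z * B + R)⁻¹ * (Bᵀ * Z * A)

variable {A Q Z Z₁ Z₂ : Matrix ι ι ℝ} {B : Matrix ι κ ℝ} {R : Matrix κ κ ℝ}

lemma riccati_add_sq (hZ : Z.IsSymm) (hR : R.IsSymm) (hU : IsUnit (Bᵀ * Z * B + R))
    (F : Matrix κ ι ℝ) :
    riccati A B Q R Z +
        (F - riccatiGain A B R Z)ᵀ * (Bᵀ * Z * B + R) * (F - riccatiGain A B R Z) =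
      riccatiCost A B Q R Z F := by
  have hUsymm : (Bᵀ * Z * B + R).IsSymm := by
    simp only [IsSymm, transpose_add, transpose_mul, transpose_transpose, hZ.eq, hR.eq,
      Matrix.mul_assoc]
  rw [riccatiGain, transpose_sub_inv_mul_mul_sub_inv_mul hUsymm
    ((isUnit_iff_isUnit_det _).mp hU)]
  simp only [riccati, riccatiCost, transpose_sub, transpose_mul, transpose_transpose, hZ.eq,
    Matrix.sub_mul, Matrix.mul_sub, Matrix.add_mul, Matrix.mul_add, Matrix.mul_assoc]
  abel

lemma riccati_eq_riccatiCost_riccatiGain (hZ : Z.IsSymm) (hR : R.IsSymm)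
    (hU : IsUnit (Bᵀ * Z * B + R)) :
    riccati A B Q R Z = riccatiCost A B Q R Z (riccatiGain A B R Z) := by
  simpa using riccati_add_sq (A := A) (Q := Q) hZ hR hU (riccatiGain A B R Z)

lemma riccati_posSemidef (hQ : Q.PosSemidef) (hR : R.PosDef) (hZ : Z.PosSemidef) :
    (riccati A B Q R Z).PosSemidef := by
  rw [riccati_eq_riccatiCost_riccatiGain hZ.isSymm hR.posSemidef.isSymm
    (posDef_transpose_mul_mul_add hZ hR B).isUnit]
  exact ((hZ.transpose_mul_mul_same _).add hQ).add (hR.posSemidef.transpose_mul_mul_same _)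

lemma riccati_sub_riccati_posSemidef (hR : R.PosDef) (hZ₁ : Z₁.PosSemidef)
    (hZ : (Z₂ - Z₁).PosSemidef) :
    (riccati A B Q R Z₂ - riccati A B Q R Z₁).PosSemidef := by
  have hZ₂ : Z₂.PosSemidef := by simpa using hZ₁.add hZ
  have hU₁ := posDef_transpose_mul_mul_add hZ₁ hR B
  set K₂ := riccatiGain A B R Z₂
  have hsub := riccati_add_sq (A := A) (Q := Q) hZ₁.isSymm hR.posSemidef.isSymm hU₁.isUnit K₂
  rw [riccati_eq_riccatiCost_riccatiGain hZ₂.isSymm hR.posSemidef.isSymm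
    (posDef_transpose_mul_mul_add hZ₂ hR B).isUnit, eq_sub_of_add_eq hsub, sub_sub_eq_add_sub,
    add_sub_right_comm, riccatiCost_sub_riccatiCost]
  exact (hZ.transpose_mul_mul_same _).add (hU₁.posSemidef.transpose_mul_mul_same _)

end

lemma posDef_fromBlocks_zero {m l : Type*} [Fintype m] [Fintype l] [DecidableEq m]
    [DecidableEq l] {A : Matrix m m ℝ} {D : Matrix l l ℝ} (hA : A.PosDef) (hD : D.PosDef) :
    (fromBlocks A 0 0 D).PosDef := by
  have := hA.isUnit.invertible
  have hpsd : (fromBlocks A 0 0ᴴ D).PosSemidef :=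
    (PosDef.fromBlocks₁₁ 0 D hA).mpr (by simpa using hD.posSemidef)
  rw [conjTranspose_zero] at hpsd
  rw [hpsd.posDef_iff_det_ne_zero, det_fromBlocks_zero₂₁]
  exact mul_ne_zero hA.det_pos.ne' hD.det_pos.ne'

namespace Sys

variable {n mL mR : ℕ} (S : Sys n mL mR) {Z Z₁ Z₂ X X₁ X₂ : Matrix (Fin n) (Fin n) ℝ}

lemma Rc_posDef (hRL : S.RL.PosDef) (hRR : S.RR.PosDef) : S.Rc.PosDef :=
  posDef_fromBlocks_zero hRL hRR

lemma Ups_posDef (hRc : S.Rc.PosDef) (hZ : Z.PosSemidef) : (S.Ups Z).PosDef :=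
  posDef_transpose_mul_mul_add hZ hRc S.Bc

lemma Lam_posDef (hRL : S.RL.PosDef) (hZ : Z.PosSemidef) : (S.Lam Z).PosDef :=
  posDef_transpose_mul_mul_add hZ hRL S.BL

lemma Zstep_eq_riccati (hRc : S.Rc.PosDef) (hZ : Z.PosSemidef) :
    S.Zstep Z = riccati S.A S.Bc S.Q S.Rc Z := by
  have hUsymm : (S.Ups Z).IsSymm := (S.Ups_posDef hRc hZ).posSemidef.isSymm
  have hdet : IsUnit (S.Ups Z).det := (isUnit_iff_isUnit_det _).mp (S.Ups_posDef hRc hZ).isUnit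
  rw [Zstep, Kg, transpose_mul, hUsymm.inv.eq, Matrix.mul_assoc _ (S.Ups Z),
    mul_nonsing_inv_cancel_left _ _ hdet]
  rfl

lemma Zstep_posSemidef (hQ : S.Q.PosSemidef) (hRc : S.Rc.PosDef) (hZ : Z.PosSemidef) :
    (S.Zstep Z).PosSemidef := by
  rw [S.Zstep_eq_riccati hRc hZ]
  exact riccati_posSemidef hQ hRc hZ

lemma Zstep_sub_Zstep_posSemidef (hRc : S.Rc.PosDef) (hZ₁ : Z₁.PosSemidef)
    (hZ : (Z₂ - Z₁).PosSemidef) : (S.Zstep Z₂ - S.Zstep Z₁).PosSemidef := by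
  rw [S.Zstep_eq_riccati hRc hZ₁, S.Zstep_eq_riccati hRc (by simpa using hZ₁.add hZ)]
  exact riccati_sub_riccati_posSemidef hRc hZ₁ hZ

lemma Psi_posSemidef (hp0 : 0 ≤ S.p) (hp1 : S.p ≤ 1) (hZ : Z.PosSemidef) (hX : X.PosSemidef) :
    (S.Psi Z X).PosSemidef :=
  (hZ.smul (sub_nonneg.mpr hp1)).add (hX.smul hp0)

lemma Psi_sub_Psi : S.Psi Z₂ X₂ - S.Psi Z₁ X₁ = S.Psi (Z₂ - Z₁) (X₂ - X₁) := by
  simp only [Psi, smul_sub]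
  abel

lemma ZX_posSemidef (hQ : S.Q.PosSemidef) (hRc : S.Rc.PosDef) (hRL : S.RL.PosDef)
    (hp0 : 0 ≤ S.p) (hp1 : S.p ≤ 1) {P : Matrix (Fin n) (Fin n) ℝ} (hP : P.PosSemidef) :
    ∀ j, (S.ZX P j).1.PosSemidef ∧ (S.ZX P j).2.PosSemidef
  | 0 => ⟨hP, hP⟩
  | j + 1 => by
    obtain ⟨hZ, hX⟩ := ZX_posSemidef hQ hRc hRL hp0 hp1 hP j
    exact ⟨S.Zstep_posSemidef hQ hRc hZ,
      riccati_posSemidef hQ hRL (S.Psi_posSemidef hp0 hp1 hZ hX)⟩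

lemma ZX_succ_sub_posSemidef (hQ : S.Q.PosSemidef) (hRc : S.Rc.PosDef) (hRL : S.RL.PosDef)
    (hp0 : 0 ≤ S.p) (hp1 : S.p ≤ 1) :
    ∀ j, ((S.ZX 0 (j + 1)).1 - (S.ZX 0 j).1).PosSemidef ∧
      ((S.ZX 0 (j + 1)).2 - (S.ZX 0 j).2).PosSemidef
  | 0 => by simpa [ZX] using S.ZX_posSemidef hQ hRc hRL hp0 hp1 PosSemidef.zero 1
  | j + 1 => by
    have hpsd := S.ZX_posSemidef hQ hRc hRL hp0 hp1 PosSemidef.zero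
    obtain ⟨hZ, hX⟩ := ZX_succ_sub_posSemidef hQ hRc hRL hp0 hp1 j
    have hΨ := S.Psi_posSemidef hp0 hp1 hZ hX
    rw [← Psi_sub_Psi] at hΨ
    exact ⟨S.Zstep_sub_Zstep_posSemidef hRc (hpsd j).1 hZ, riccati_sub_riccati_posSemidef hRL
      (S.Psi_posSemidef hp0 hp1 (hpsd j).1 (hpsd j).2) hΨ⟩

end Sys

/-- For positive semidefinite `Q` and positive definite `R^L, R^R`
and `p ∈ [0,1]`, the finite-horizon Riccati recursion with zero terminal value is
well defined (`Υ > 0` and `Λ > 0` at every step), produces positive semidefinite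
matrices `Z_k(N), X_k(N)`, and the matrices `Ψ_0(N) = (1−p)Z_0(N) + pX_0(N)` are
monotonically nondecreasing in the horizon `N` in the Loewner order. -/
theorem riccati_monotone {n mL mR : ℕ} (S : Sys n mL mR)
    (hQ : S.Q.PosSemidef) (hRL : S.RL.PosDef) (hRR : S.RR.PosDef)
    (hp0 : 0 ≤ S.p) (hp1 : S.p ≤ 1) :
    (∀ j : ℕ, (S.Ups (S.ZX 0 j).1).PosDef ∧
      (S.Lam (S.Psi (S.ZX 0 j).1 (S.ZX 0 j).2)).PosDef) ∧
    (∀ j : ℕ, (S.ZX 0 j).1.PosSemidef ∧ (S.ZX 0 j).2.PosSemidef) ∧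
    (∀ N : ℕ,
      (S.Psi (S.ZX 0 (N + 2)).1 (S.ZX 0 (N + 2)).2
        - S.Psi (S.ZX 0 (N + 1)).1 (S.ZX 0 (N + 1)).2).PosSemidef) := by
  have hRc := S.Rc_posDef hRL hRR
  have hpsd := S.ZX_posSemidef hQ hRc hRL hp0 hp1 PosSemidef.zero
  have hΨ (j : ℕ) := S.Psi_posSemidef hp0 hp1 (hpsd j).1 (hpsd j).2
  refine ⟨fun j => ⟨S.Ups_posDef hRc (hpsd j).1, S.Lam_posDef hRL (hΨ j)⟩, hpsd, fun N => ?_⟩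
  obtain ⟨hZ, hX⟩ := S.ZX_succ_sub_posSemidef hQ hRc hRL hp0 hp1 (N + 1)
  rw [Sys.Psi_sub_Psi]
  exact S.Psi_posSemidef hp0 hp1 hZ hX

end NCS12
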